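/- arXiv:math/0701075 — 2 statements merged into one kernel-verified Lean document; each statement's English description precedes it below -/
import Mathlib

section
/- Let G be a graph of genus g ≥ 2 and v a vertex of G such that the graph G' obtained by deleting v and all edges incident to v is a tree. Then r(g·(v)) = 0, i.e., v is not a Weierstrass point of G. -/
open Finset

structure Multigraph (V : Type) [Fintype V] [DecidableEq V] : Type where
  mult : V → V → ℕ
  symm : ∀ u v : V, mult u v = mult v u
  loopless : ∀ v : V, mult v v = 0
  connected : ∀ u v : V, Relation.ReflTransGen (fun a b => 0 < mult a b) u v

def divDeg {V : Type} [Fintype V] (D : V → ℤ) : ℤ := ∑ v, D v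

def Effective {V : Type} (D : V → ℤ) : Prop := ∀ v, 0 ≤ D v

namespace Multigraph

variable {V : Type} [Fintype V] [DecidableEq V]

def degree (G : Multigraph V) (v : V) : ℕ := ∑ w, G.mult v w

def edgeCount (G : Multigraph V) : ℕ := (∑ v, G.degree v) / 2

def genus (G : Multigraph V) : ℤ := (G.edgeCount : ℤ) - (Fintype.card V : ℤ) + 1

def laplacian (G : Multigraph V) (f : V → ℤ) : V → ℤ :=
  fun v => ∑ w, (G.mult v w : ℤ) * (f v - f w)

def Principal (G : Multigraph V) (D : V → ℤ) : Prop := ∃ f : V → ℤ, D = G.laplacian f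

def Winnable (G : Multigraph V) (D : V → ℤ) : Prop :=
  ∃ E : V → ℤ, Effective E ∧ G.Principal (D - E)

noncomputable def rank (G : Multigraph V) (D : V → ℤ) : ℤ :=
  sSup (insert (-1) {k : ℤ | 0 ≤ k ∧ ∀ E : V → ℤ, Effective E → divDeg E = k →
    G.Winnable (D - E)})

end Multigraph

/-! Deleting `v` leaves a tree, so counting edges gives `deg v = g + 1`. Order the vertices by
distance in the tree from some `u ≠ v`, and put `v` last. The Baker–Norine divisor `ν` of this
ordering is `-1` at `u`, nonnegative at the other tree vertices and `deg v - 1 = g` at `v`, so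
`g·(v) - (u) ≤ ν` is not winnable and `r(g·(v)) < 1`; as `g·(v)` is effective,
`r(g·(v)) = 0`. -/

theorem exists_earliest_max {V α β : Type*} [Fintype V] [Nonempty V] [LinearOrder α]
    [LinearOrder β] (f : V → β) (ord : V → α) :
    ∃ w, (∀ x, f x ≤ f w) ∧ ∀ x, ord x < ord w → f x < f w := by
  obtain ⟨b, -, hb⟩ := Finset.univ.exists_max_image f Finset.univ_nonempty
  obtain ⟨w, hw, hmin⟩ := (Finset.univ.filter fun x => f x = f b).exists_min_image ord
    ⟨b, by simp⟩
  have hwb : f w = f b := (Finset.mem_filter.mp hw).2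
  refine ⟨w, fun x => hwb ▸ hb x (Finset.mem_univ x), fun x hx => ?_⟩
  refine lt_of_le_of_ne (hwb ▸ hb x (Finset.mem_univ x)) fun hfx => ?_
  exact (hmin x (by simp [hfx, hwb])).not_gt hx

namespace Multigraph

variable {V : Type} [Fintype V] [DecidableEq V] (G : Multigraph V)

theorem even_sum_degree : Even (∑ v, G.degree v) := by
  rw [← ZMod.natCast_eq_zero_iff_even]
  simp only [degree, Nat.cast_sum, ← Finset.sum_product']
  -- mod 2, swapping endpoints cancels `mult a b` against `mult b a = mult a b`; loops vanish
  refine Finset.sum_involution (fun p _ => p.swap) (fun p _ => ?_) (fun p _ hp hswap => ?_)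
    (by simp) (by simp)
  · rw [Prod.fst_swap, Prod.snd_swap, G.symm p.2 p.1, CharTwo.add_self_eq_zero]
  · have hdiag : p.1 = p.2 := congrArg Prod.snd hswap
    simp [hdiag, G.loopless] at hp

theorem two_mul_edgeCount : 2 * G.edgeCount = ∑ v, G.degree v :=
  Nat.two_mul_div_two_of_even G.even_sum_degree

def toSimpleGraph : SimpleGraph V where
  Adj a b := 0 < G.mult a b
  symm := ⟨fun a b h => by rwa [G.symm]⟩
  loopless := ⟨fun a h => by simp [G.loopless] at h⟩

theorem toSimpleGraph_preconnected : G.toSimpleGraph.Preconnected := fun a b =>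
  (SimpleGraph.reachable_iff_reflTransGen a b).mpr (G.connected a b)

theorem Winnable.mono {G : Multigraph V} {D D' : V → ℤ} (h : G.Winnable D) (hle : D ≤ D') :
    G.Winnable D' := by
  obtain ⟨E, hE, hDE⟩ := h
  refine ⟨E + (D' - D), fun w => ?_, by rwa [show D' - (E + (D' - D)) = D - E by abel]⟩
  have := hle w
  simp only [Pi.add_apply, Pi.sub_apply]
  linarith [hE w]

theorem winnable_of_effective {D : V → ℤ} (hD : Effective D) : G.Winnable D :=
  ⟨D, hD, 0, by ext w; simp [laplacian]⟩

theorem rank_eq_zero_of_not_winnable {D E : V → ℤ} (hD : G.Winnable D) (hE : Effective E)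
    (hdeg : divDeg E = 1) (hDE : ¬ G.Winnable (D - E)) : G.rank D = 0 := by
  set S := insert (-1) {k : ℤ | 0 ≤ k ∧ ∀ E : V → ℤ, Effective E → divDeg E = k →
    G.Winnable (D - E)}
  have hle : ∀ k ∈ S, k ≤ 0 := by
    rintro k (rfl | ⟨-, hk⟩)
    · norm_num
    by_contra! hk1
    have hkE : Effective (k • E) := fun w => mul_nonneg hk1.le (hE w)
    have hdegk : divDeg (k • E) = k := by
      simp only [divDeg, Pi.smul_apply, smul_eq_mul, ← Finset.mul_sum]
      rw [← divDeg, hdeg, mul_one]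
    refine hDE ((hk _ hkE hdegk).mono fun w => ?_)
    simp only [Pi.sub_apply, Pi.smul_apply, smul_eq_mul]
    nlinarith [hE w]
  have hzero : (0 : ℤ) ∈ S := by
    refine Set.mem_insert_of_mem _ ⟨le_rfl, fun E' hE' hdeg' => hD.mono fun w => ?_⟩
    have := (Finset.sum_eq_zero_iff_of_nonneg fun w _ => hE' w).mp hdeg' w (Finset.mem_univ w)
    simp [this]
  exact le_antisymm (csSup_le ⟨-1, Set.mem_insert _ _⟩ hle) (le_csSup ⟨0, hle⟩ hzero)

section Order

variable {α : Type*} [LinearOrder α]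

/-- The number of edges from `w` to vertices preceding it; `earlierDegree ord - 1` is the
divisor `ν` that Baker and Norine attach to the ordering `ord`. -/
def earlierDegree (ord : V → α) (w : V) : ℕ :=
  ∑ x with ord x < ord w, G.mult w x

theorem mult_le_earlierDegree {ord : V → α} {w x : V} (h : ord x < ord w) :
    G.mult w x ≤ G.earlierDegree ord w :=
  Finset.single_le_sum (fun _ _ => Nat.zero_le _) (by simpa using h)

theorem earlierDegree_eq_degree {ord : V → α} {v : V} (h : ∀ w, w ≠ v → ord w < ord v) :
    G.earlierDegree ord v = G.degree v :=
  Finset.sum_filter_of_ne fun w _ hw => h w fun hwv => hw (by simp [hwv, G.loopless])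

theorem earlierDegree_le_laplacian {ord : V → α} {f : V → ℤ} {w : V}
    (hmax : ∀ x, f x ≤ f w) (hlt : ∀ x, ord x < ord w → f x < f w) :
    (G.earlierDegree ord w : ℤ) ≤ G.laplacian f w := by
  unfold earlierDegree laplacian
  push_cast
  calc ∑ x with ord x < ord w, (G.mult w x : ℤ)
      ≤ ∑ x with ord x < ord w, (G.mult w x : ℤ) * (f w - f x) :=
        Finset.sum_le_sum fun x hx => le_mul_of_one_le_right (by positivity)
          (by linarith [hlt x (Finset.mem_filter.mp hx).2])
    _ ≤ ∑ x, (G.mult w x : ℤ) * (f w - f x) :=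
        Finset.sum_le_sum_of_subset_of_nonneg (Finset.filter_subset _ _)
          fun x _ _ => mul_nonneg (by positivity) (sub_nonneg.mpr (hmax x))

/-- Baker–Norine, Theorem 3.3. At the earliest maximum of `f`, `Δ f` is at least the number of
edges to earlier vertices. -/
theorem not_winnable_of_lt_earlierDegree [Nonempty V] (ord : V → α) {D : V → ℤ}
    (hD : ∀ w, D w < G.earlierDegree ord w) : ¬ G.Winnable D := by
  rintro ⟨E, hE, f, hf⟩
  obtain ⟨w, hmax, hlt⟩ := exists_earliest_max f ord
  have hw : D w - E w = G.laplacian f w := congrFun hf w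
  linarith [hE w, hD w, G.earlierDegree_le_laplacian hmax hlt]

end Order

end Multigraph

theorem SimpleGraph.Reachable.exists_adj_dist_lt {V : Type*} {G : SimpleGraph V} {u w : V}
    (h : G.Reachable w u) (hne : w ≠ u) : ∃ y, G.Adj w y ∧ G.dist y u < G.dist w u := by
  obtain ⟨p, hp⟩ := h.exists_walk_length_eq_dist
  cases p with
  | nil => exact absurd rfl hne
  | cons hadj q =>
    rw [SimpleGraph.Walk.length_cons] at hp
    exact ⟨_, hadj, (SimpleGraph.dist_le q).trans_lt (by omega)⟩

namespace Multigraph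

variable {V : Type} [Fintype V] [DecidableEq V] (G : Multigraph V) {v : V}
  {G' : Multigraph {w : V // w ≠ v}}

theorem degree_eq_mult_add_degree (hsub : ∀ a b, G'.mult a b = G.mult a b)
    (w : {w : V // w ≠ v}) : G.degree w = G.mult w v + G'.degree w := by
  simp only [degree, Fintype.sum_eq_add_sum_subtype_ne _ v, hsub]

theorem sum_mult_eq_degree (v : V) : ∑ w : {w : V // w ≠ v}, G.mult w v = G.degree v := by
  simp only [degree, Fintype.sum_eq_add_sum_subtype_ne _ v, G.loopless, zero_add, G.symm]

theorem edgeCount_eq_add_degree (hsub : ∀ a b, G'.mult a b = G.mult a b) :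
    G.edgeCount = G'.edgeCount + G.degree v := by
  have h := G.two_mul_edgeCount
  rw [Fintype.sum_eq_add_sum_subtype_ne _ v] at h
  simp only [G.degree_eq_mult_add_degree hsub, Finset.sum_add_distrib, sum_mult_eq_degree,
    ← G'.two_mul_edgeCount] at h
  omega

theorem genus_eq_degree_sub_one (hsub : ∀ a b, G'.mult a b = G.mult a b)
    (htree : (G'.edgeCount : ℤ) = (Fintype.card {w : V // w ≠ v} : ℤ) - 1) :
    G.genus = G.degree v - 1 := by
  have hcard : Fintype.card V = Fintype.card {w : V // w ≠ v} + 1 := by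
    rw [Fintype.card_subtype_compl, Fintype.card_subtype_eq]
    have : 0 < Fintype.card V := Fintype.card_pos_iff.mpr ⟨v⟩
    omega
  rw [genus, G.edgeCount_eq_add_degree hsub, hcard]
  push_cast
  omega

/-- Order by distance to `u` in `G'`, with `v` last. -/
theorem exists_order_of_residual (hsub : ∀ a b, G'.mult a b = G.mult a b)
    (u : {w : V // w ≠ v}) : ∃ ord : V → WithTop ℕ,
      (∀ w, w ≠ u.1 → w ≠ v → 0 < G.earlierDegree ord w) ∧
        G.earlierDegree ord v = G.degree v := by
  let ord : V → WithTop ℕ := fun w =>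
    if h : w = v then ⊤ else G'.toSimpleGraph.dist ⟨w, h⟩ u
  refine ⟨ord, fun w hwu hwv => ?_, G.earlierDegree_eq_degree fun w hw => by simp [ord, hw]⟩
  obtain ⟨y, hadj, hlt⟩ := (G'.toSimpleGraph_preconnected ⟨w, hwv⟩ u).exists_adj_dist_lt
    fun h => hwu (congrArg Subtype.val h)
  refine lt_of_lt_of_le ?_ (G.mult_le_earlierDegree (x := y.1) ?_)
  · exact (hsub ⟨w, hwv⟩ y).symm ▸ hadj
  · simpa [ord, hwv, y.2] using hlt

end Multigraph

/-- If v is a vertex of a graph G of genus g ≥ 2 such that deleting v and all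
edges incident to v leaves a tree (a connected graph G' with
|E(G')| = |V(G')| - 1), then r(g·(v)) = 0, i.e., v is not a Weierstrass point. -/
theorem residual_tree_not_weierstrass {V : Type} [Fintype V] [DecidableEq V]
    (G : Multigraph V) (v : V) (hg : 2 ≤ G.genus)
    (G' : Multigraph {w : V // w ≠ v})
    (hsub : ∀ a b : {w : V // w ≠ v}, G'.mult a b = G.mult a b)
    (htree : (G'.edgeCount : ℤ) = (Fintype.card {w : V // w ≠ v} : ℤ) - 1) :
    G.rank (G.genus • (fun w => if w = v then (1 : ℤ) else 0)) = 0 := by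
  have : Nonempty V := ⟨v⟩
  obtain ⟨u⟩ : Nonempty {w : V // w ≠ v} := Fintype.card_pos_iff.mp (by omega)
  have hdeg := G.genus_eq_degree_sub_one hsub htree
  obtain ⟨ord, hord, hordv⟩ := G.exists_order_of_residual hsub u
  have hD : ∀ w, (G.genus • fun w => if w = v then (1 : ℤ) else 0) w =
      if w = v then G.genus else 0 := fun w => by simp
  refine G.rank_eq_zero_of_not_winnable (E := Pi.single u.1 1)
    (G.winnable_of_effective fun w => ?_) (fun w => by rw [Pi.single_apply]; split_ifs <;> norm_num)
    (by simp [divDeg]) (G.not_winnable_of_lt_earlierDegree ord fun w => ?_)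
  · rw [hD]
    split_ifs <;> omega
  · rw [Pi.sub_apply, hD, Pi.single_apply]
    split_ifs with hwv hwu hwu
    · exact (u.2 (hwu ▸ hwv)).elim
    · subst hwv
      omega
    · omega
    · linarith [hord w hwu hwv]
end

section
/- Let X be a smooth curve over a complete discretely valued field K with algebraically closed residue field, let 𝔛/R be a strongly semistable regular model with dual graph G, and let ρ : Div(X) → Div(G) be the specialization map. Then for every divisor D on X, r_G(ρ(D)) ≥ r_X(D). -/
/-!
Let `k + 1 = dim L(D) > 0`. Removing a `K`-rational point `p` from `D` lowers `dim L(D)` by at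
most one: any two functions of `L(D) \ L(D - p)` have the same order at `p`, so their quotient is a
unit at `p`, congruent to a constant since the residue field at `p` is `K`. Given an effective
divisor `E'` of degree `k` on `G`, surjectivity of `ρ` on `X(K)` lifts it to an effective rational
divisor `E` of degree `k`, so `L(D - E) ≠ 0` and `D - E` is equivalent to an effective divisor;
`ρ` carries this equivalence to `G`, so `ρ(D) - E'` is winnable.
-/

/-- An abstract smooth proper geometrically connected curve over K, presented
through its function field F together with the order-of-vanishing (discrete
valuation) functions at its closed points.  `ratPt` is the set of K-rational
points (the closed points with residue field K, as expressed by the `residue`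
axiom). -/
structure AlgCurve (K F : Type) [Field K] [Field F] [Algebra K F] : Type 1 where
  /-- The closed points of the curve. -/
  Point : Type
  /-- The K-rational points X(K). -/
  ratPt : Set Point
  /-- Order of vanishing at each closed point (an additive valuation). -/
  v : Point → F → WithTop ℤ
  v_zero : ∀ p, v p 0 = ⊤
  v_one : ∀ p, v p 1 = 0
  v_mul : ∀ p (f g : F), v p (f * g) = v p f + v p g
  v_add : ∀ p (f g : F), min (v p f) (v p g) ≤ v p (f + g)
  v_const : ∀ p (c : K), c ≠ 0 → v p (algebraMap K F c) = 0
  v_ne_top : ∀ p (f : F), f ≠ 0 → v p f ≠ ⊤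
  v_finite : ∀ f : F, f ≠ 0 → {p | v p f ≠ 0}.Finite
  residue : ∀ p ∈ ratPt, ∀ f : F, v p f = 0 → ∃ c : K, 0 < v p (f - algebraMap K F c)

/-- Degree of a divisor. -/
def degD {α : Type} (D : α →₀ ℤ) : ℤ := D.sum fun _ n => n

/-- Effectivity of a divisor. -/
def EffD {α : Type} (D : α →₀ ℤ) : Prop := ∀ p, 0 ≤ D p

namespace AlgCurve

variable {K F : Type} [Field K] [Field F] [Algebra K F]

/-- D is the divisor of a nonzero rational function. -/
def IsPrincipal (C : AlgCurve K F) (D : C.Point →₀ ℤ) : Prop :=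
  ∃ f : F, f ≠ 0 ∧ ∀ p, C.v p f = (D p : WithTop ℤ)

/-- Linear equivalence of divisors. -/
def LinEq (C : AlgCurve K F) (D D' : C.Point →₀ ℤ) : Prop := C.IsPrincipal (D - D')

/-- D is linearly equivalent to an effective divisor, i.e. |D| ≠ ∅. -/
def Winnable (C : AlgCurve K F) (D : C.Point →₀ ℤ) : Prop :=
  ∃ E, EffD E ∧ C.LinEq D E

/-- The Baker–Norine style rank of a divisor on the curve: r(D) = -1 if
|D| = ∅, and otherwise the maximal k such that |D - E| ≠ ∅ for every effective
divisor E of degree k supported on K-rational points. -/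
noncomputable def rank (C : AlgCurve K F) (D : C.Point →₀ ℤ) : ℤ :=
  sSup (insert (-1) {k : ℤ | 0 ≤ k ∧ ∀ E : C.Point →₀ ℤ,
    EffD E → ↑E.support ⊆ C.ratPt → degD E = k → C.Winnable (D - E)})

/-- The Riemann–Roch space L(D) = {f : (f) + D ≥ 0} ∪ {0}, a K-subspace of F. -/
def L (C : AlgCurve K F) (D : C.Point →₀ ℤ) : Submodule K F where
  carrier := {f : F | ∀ p, ((-(D p) : ℤ) : WithTop ℤ) ≤ C.v p f}
  zero_mem' := by intro p; rw [C.v_zero]; exact le_top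
  add_mem' := by
    intro a b ha hb p
    exact le_trans (le_min (ha p) (hb p)) (C.v_add p a b)
  smul_mem' := by
    intro c f hf
    rcases eq_or_ne c 0 with rfl | hc
    · intro p; rw [zero_smul, C.v_zero]; exact le_top
    · intro p
      rw [Algebra.smul_def, C.v_mul, C.v_const p c hc, zero_add]
      exact hf p

/-- The dimension of the complete linear system |D|: dim_K L(D) - 1. -/
noncomputable def crank (C : AlgCurve K F) (D : C.Point →₀ ℤ) : ℤ :=
  (Module.finrank K (C.L D) : ℤ) - 1

end AlgCurve


open Finset

theorem degD_add {α : Type} (A B : α →₀ ℤ) : degD (A + B) = degD A + degD B :=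
  Finsupp.sum_add_index' (fun _ => rfl) fun _ _ _ => rfl

theorem degD_single {α : Type} (p : α) (n : ℤ) : degD (Finsupp.single p n) = n :=
  Finsupp.sum_single_index rfl

theorem divDeg_sub {V : Type} [Fintype V] (A B : V → ℤ) :
    divDeg (A - B) = divDeg A - divDeg B :=
  Finset.sum_sub_distrib _ _

namespace AlgCurve

open Module

variable {K F : Type} [Field K] [Field F] [Algebra K F] (C : AlgCurve K F)

/-- The order of vanishing as an integer, with junk value `0` at `f = 0` (where `v = ⊤`). -/
noncomputable def ord (p : C.Point) (f : F) : ℤ := (C.v p f).untopD 0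

variable {C}

theorem v_eq_ord {p : C.Point} {f : F} (hf : f ≠ 0) : C.v p f = C.ord p f := by
  obtain ⟨n, hn⟩ := WithTop.ne_top_iff_exists.1 (C.v_ne_top p f hf)
  rw [ord, ← hn, WithTop.untopD_coe]

theorem ord_inv {p : C.Point} {f : F} (hf : f ≠ 0) : C.ord p f⁻¹ = -C.ord p f := by
  have h := C.v_mul p f f⁻¹
  rw [mul_inv_cancel₀ hf, C.v_one, v_eq_ord hf, v_eq_ord (inv_ne_zero hf)] at h
  have h' : (0 : ℤ) = C.ord p f + C.ord p f⁻¹ := by exact_mod_cast h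
  omega

variable (C)

noncomputable def divisor (f : F) : C.Point →₀ ℤ :=
  Finsupp.ofSupportFinite (fun p => C.ord p f) <| by
    rcases eq_or_ne f 0 with rfl | hf
    · simp [ord, C.v_zero]
    · refine (C.v_finite f hf).subset fun p hp hv => hp ?_
      simp [ord, show C.v p f = 0 from hv]

variable {C}

theorem divisor_apply (f : F) (p : C.Point) : C.divisor f p = C.ord p f := rfl

theorem isPrincipal_divisor {f : F} (hf : f ≠ 0) : C.IsPrincipal (C.divisor f) :=
  ⟨f, hf, fun _ => v_eq_ord hf⟩

theorem divisor_inv {f : F} (hf : f ≠ 0) : C.divisor f⁻¹ = -C.divisor f := by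
  ext p
  simp [divisor_apply, ord_inv hf]

theorem mem_L_iff_of_ne_zero {D : C.Point →₀ ℤ} {f : F} (hf : f ≠ 0) :
    f ∈ C.L D ↔ ∀ p, -D p ≤ C.ord p f := by
  simp only [L, Submodule.mem_mk, AddSubmonoid.mem_mk, AddSubsemigroup.mem_mk, Set.mem_ofPred_eq,
    v_eq_ord hf, WithTop.coe_le_coe]

theorem winnable_of_mem_L {D : C.Point →₀ ℤ} {f : F} (hf : f ≠ 0) (hfD : f ∈ C.L D) :
    C.Winnable D := by
  refine ⟨D + C.divisor f, fun p => ?_, ?_⟩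
  · have := (mem_L_iff_of_ne_zero hf).1 hfD p
    rw [Finsupp.add_apply, divisor_apply]
    omega
  · have hD : D - (D + C.divisor f) = C.divisor f⁻¹ := by
      rw [divisor_inv hf]
      abel
    change C.IsPrincipal _
    rw [hD]
    exact isPrincipal_divisor (inv_ne_zero hf)

theorem L_mono {D D' : C.Point →₀ ℤ} (h : D ≤ D') : C.L D ≤ C.L D' :=
  fun _ hf p => le_trans (WithTop.coe_le_coe.2 (neg_le_neg (h p))) (hf p)

theorem mem_L_sub_single {D : C.Point →₀ ℤ} {p : C.Point} {f : F} (hf : f ∈ C.L D)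
    (hp : ((-D p : ℤ) : WithTop ℤ) < C.v p f) : f ∈ C.L (D - Finsupp.single p 1) := by
  classical
  intro q
  rw [Finsupp.sub_apply, Finsupp.single_apply]
  split_ifs with hpq
  · subst hpq
    cases hv : C.v p f with
    | top => exact le_top
    | coe n =>
      rw [hv] at hp
      norm_cast at hp ⊢
      omega
  · simpa using hf q

/-- Residue-field argument: `f / g` is a unit at `p`, hence congruent to a constant of `K`
modulo the maximal ideal at `p`. -/
theorem exists_sub_smul_mem_L_sub_single {D : C.Point →₀ ℤ} {p : C.Point} (hp : p ∈ C.ratPt)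
    {f g : F} (hf : f ∈ C.L D) (hg : g ∈ C.L D) (hgp : C.v p g = ((-D p : ℤ) : WithTop ℤ)) :
    ∃ c : K, f - c • g ∈ C.L (D - Finsupp.single p 1) := by
  rcases (hf p).lt_or_eq with hlt | hfp
  · exact ⟨0, by simpa using mem_L_sub_single hf hlt⟩
  have hg0 : g ≠ 0 := by
    rintro rfl
    exact WithTop.top_ne_coe (C.v_zero p ▸ hgp)
  have hf0 : f ≠ 0 := by
    rintro rfl
    exact WithTop.top_ne_coe (C.v_zero p ▸ hfp.symm)
  have hord : C.ord p f = C.ord p g := by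
    have := hfp.symm.trans hgp.symm
    rwa [v_eq_ord hf0, v_eq_ord hg0, WithTop.coe_inj] at this
  have hunit : C.v p (f * g⁻¹) = 0 := by
    rw [C.v_mul, v_eq_ord hf0, v_eq_ord (inv_ne_zero hg0), ord_inv hg0, hord,
      ← WithTop.coe_add, add_neg_cancel, WithTop.coe_zero]
  obtain ⟨c, hc⟩ := C.residue p hp _ hunit
  refine ⟨c, mem_L_sub_single (sub_mem hf (Submodule.smul_mem _ c hg)) ?_⟩
  have hfactor : f - c • g = g * (f * g⁻¹ - algebraMap K F c) := by
    rw [Algebra.smul_def]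
    field_simp
  rw [hfactor, C.v_mul, hgp]
  simpa using WithTop.add_lt_add_left (WithTop.coe_ne_top (a := -D p)) hc

theorem exists_L_le_L_sub_single_sup_span {D : C.Point →₀ ℤ} {p : C.Point}
    (hp : p ∈ C.ratPt) : ∃ g : F, C.L D ≤ C.L (D - Finsupp.single p 1) ⊔ K ∙ g := by
  by_cases h : ∃ g ∈ C.L D, C.v p g = ((-D p : ℤ) : WithTop ℤ)
  · obtain ⟨g, hg, hgp⟩ := h
    refine ⟨g, fun f hf => ?_⟩
    obtain ⟨c, hc⟩ := exists_sub_smul_mem_L_sub_single hp hf hg hgp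
    exact Submodule.mem_sup.2
      ⟨_, hc, c • g, Submodule.mem_span_singleton.2 ⟨c, rfl⟩, sub_add_cancel f _⟩
  · push Not at h
    exact ⟨0, fun f hf =>
      Submodule.mem_sup_left (mem_L_sub_single hf (lt_of_le_of_ne (hf p) (h f hf).symm))⟩

theorem finrank_L_le_finrank_L_sub_single_add_one {D : C.Point →₀ ℤ} {p : C.Point}
    (hp : p ∈ C.ratPt) :
    finrank K (C.L D) ≤ finrank K (C.L (D - Finsupp.single p 1)) + 1 := by
  by_cases hfin : FiniteDimensional K (C.L D)
  swap
  · simp [finrank_of_not_finite hfin]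
  obtain ⟨g, hg⟩ := exists_L_le_L_sub_single_sup_span (D := D) hp
  have : FiniteDimensional K (C.L (D - Finsupp.single p 1)) :=
    Submodule.finiteDimensional_of_le (L_mono (sub_le_self _ (Finsupp.single_nonneg.2 zero_le_one)))
  calc finrank K (C.L D)
      ≤ finrank K ↥(C.L (D - Finsupp.single p 1) ⊔ K ∙ g) := Submodule.finrank_mono hg
    _ ≤ finrank K (C.L (D - Finsupp.single p 1)) + finrank K (K ∙ g) :=
      Submodule.finrank_add_le_finrank_add_finrank _ _
    _ ≤ finrank K (C.L (D - Finsupp.single p 1)) + 1 := by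
      gcongr
      simpa using finrank_span_le_card ({g} : Set F)

variable (C) in
noncomputable def ratEffDivisors : AddSubmonoid (C.Point →₀ ℤ) :=
  AddSubmonoid.closure ((fun p => Finsupp.single p 1) '' C.ratPt)

theorem finrank_L_le_finrank_L_sub_add_degD {E : C.Point →₀ ℤ} (hE : E ∈ C.ratEffDivisors)
    (D : C.Point →₀ ℤ) : (finrank K (C.L D) : ℤ) ≤ finrank K (C.L (D - E)) + degD E := by
  induction hE using AddSubmonoid.closure_induction generalizing D with
  | mem _ h =>
    obtain ⟨p, hp, rfl⟩ := h
    rw [degD_single]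
    exact_mod_cast finrank_L_le_finrank_L_sub_single_add_one hp
  | zero =>
    rw [sub_zero]
    simp [degD]
  | add E E' _ _ ihE ihE' =>
    have := ihE' (D - E)
    rw [sub_sub] at this
    linarith [ihE D, degD_add E E']

theorem Winnable.map {V : Type} [Fintype V] [DecidableEq V] {G : Multigraph V}
    {ρ : (C.Point →₀ ℤ) →+ (V → ℤ)} (heff : ∀ D, EffD D → Effective (ρ D))
    (hprin : ∀ D, C.IsPrincipal D → G.Principal (ρ D)) {D : C.Point →₀ ℤ}
    (hD : C.Winnable D) : G.Winnable (ρ D) := by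
  obtain ⟨E, hE, hDE⟩ := hD
  exact ⟨ρ E, heff E hE, map_sub ρ D E ▸ hprin _ hDE⟩

end AlgCurve

namespace Multigraph

variable {V : Type} [Fintype V] [DecidableEq V] (G : Multigraph V)

theorem divDeg_laplacian (f : V → ℤ) : divDeg (G.laplacian f) = 0 := by
  set S := ∑ v, ∑ w, (G.mult v w : ℤ) * (f v - f w)
  have hanti : S = -S := by
    calc S = ∑ w, ∑ v, (G.mult v w : ℤ) * (f v - f w) := Finset.sum_comm
      _ = ∑ w, ∑ v, -((G.mult w v : ℤ) * (f w - f v)) := by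
        refine Finset.sum_congr rfl fun w _ => Finset.sum_congr rfl fun v _ => ?_
        rw [G.symm w v]
        ring
      _ = -S := by simp only [Finset.sum_neg_distrib, S]
  change S = 0
  omega

variable {G}

theorem Winnable.divDeg_nonneg {D : V → ℤ} (hD : G.Winnable D) : 0 ≤ divDeg D := by
  obtain ⟨E, hE, f, hf⟩ := hD
  have h := congrArg divDeg hf
  have hE0 : 0 ≤ divDeg E := Finset.sum_nonneg fun v _ => hE v
  rw [divDeg_sub, divDeg_laplacian] at h
  linarith

variable (G)

/-- Testing against a divisor concentrated at one vertex bounds the rank by `deg D`. -/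
theorem bddAbove_rank_set [Nonempty V] (D : V → ℤ) :
    BddAbove (insert (-1) {k : ℤ | 0 ≤ k ∧ ∀ E : V → ℤ, Effective E → divDeg E = k →
      G.Winnable (D - E)}) := by
  obtain ⟨v⟩ := ‹Nonempty V›
  refine ⟨max (divDeg D) (-1), ?_⟩
  rintro k (rfl | ⟨hk, hwin⟩)
  · exact le_max_right _ _
  · have hdegE : divDeg (Pi.single v k) = k := by simp [divDeg]
    have hdeg := (hwin _ (Pi.single_nonneg.2 hk : (0 : V → ℤ) ≤ Pi.single v k) hdegE).divDeg_nonneg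
    rw [divDeg_sub, hdegE] at hdeg
    exact le_max_of_le_left (by omega)

theorem neg_one_le_rank [Nonempty V] (D : V → ℤ) : -1 ≤ G.rank D :=
  le_csSup (G.bddAbove_rank_set D) (Set.mem_insert _ _)

theorem le_rank [Nonempty V] {D : V → ℤ} {k : ℤ} (hk : 0 ≤ k)
    (hwin : ∀ E : V → ℤ, Effective E → divDeg E = k → G.Winnable (D - E)) : k ≤ G.rank D :=
  le_csSup (G.bddAbove_rank_set D) (Set.mem_insert_of_mem _ ⟨hk, hwin⟩)

end Multigraph

theorem exists_mem_closure_map_eq_of_effective {α V : Type} [Fintype V] [DecidableEq V]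
    (ρ : (α →₀ ℤ) →+ (V → ℤ)) {S : Set α}
    (hsurj : ∀ w : V, ∃ P ∈ S, ρ (Finsupp.single P 1) = fun u => if u = w then 1 else 0)
    {E' : V → ℤ} (hE' : Effective E') :
    ∃ E ∈ AddSubmonoid.closure ((fun p => Finsupp.single p (1 : ℤ)) '' S), ρ E = E' := by
  choose P hPS hρP using hsurj
  refine ⟨∑ w, (E' w).toNat • Finsupp.single (P w) 1,
    sum_mem fun w _ => nsmul_mem (AddSubmonoid.subset_closure (Set.mem_image_of_mem _ (hPS w))) _, ?_⟩
  ext u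
  simp only [map_sum, map_nsmul, hρP, Finset.sum_apply, Pi.smul_apply, smul_ite, smul_zero]
  simp [hE' u]

open Finset in
theorem specialization_lemma_general {K F : Type} [Field K] [Field F] [Algebra K F]
    {V : Type} [Fintype V] [DecidableEq V]
    (C : AlgCurve K F) (G : Multigraph V)
    (hinf : C.ratPt.Infinite)
    (ρ : (C.Point →₀ ℤ) →+ (V → ℤ))
    (hdeg : ∀ D : C.Point →₀ ℤ, divDeg (ρ D) = degD D)
    (heff : ∀ D : C.Point →₀ ℤ, EffD D → Effective (ρ D))
    (hprin : ∀ D : C.Point →₀ ℤ, C.IsPrincipal D → G.Principal (ρ D))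
    (hsurj : ∀ w : V, ∃ P ∈ C.ratPt,
      ρ (Finsupp.single P 1) = fun u => if u = w then 1 else 0) :
    ∀ D : C.Point →₀ ℤ, C.crank D ≤ G.rank (ρ D) := by
  intro D
  have : Nonempty V := by
    obtain ⟨P, -⟩ := hinf.nonempty
    by_contra hV
    simpa [divDeg, degD_single, not_nonempty_iff.1 hV] using hdeg (Finsupp.single P 1)
  rcases lt_or_ge (C.crank D) 0 with hneg | hnonneg
  · have : C.crank D = -1 := by
      unfold AlgCurve.crank at hneg ⊢
      omega
    exact this ▸ G.neg_one_le_rank _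
  refine G.le_rank hnonneg fun _ hE' hdegE' => ?_
  obtain ⟨E, hE, rfl⟩ := exists_mem_closure_map_eq_of_effective ρ hsurj hE'
  have hpos : 0 < Module.finrank K (C.L (D - E)) := by
    have := AlgCurve.finrank_L_le_finrank_L_sub_add_degD hE D
    rw [← hdeg, hdegE', AlgCurve.crank] at this
    omega
  obtain ⟨f, hf, hf0⟩ := (Submodule.ne_bot_iff (C.L (D - E))).1 fun h => by
    rw [h, finrank_bot] at hpos
    exact hpos.false
  rw [← map_sub]
  exact (AlgCurve.winnable_of_mem_L hf0 hf).map heff hprin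

open Finset in
/-- The Specialization Lemma: let X be a smooth curve over the fraction field K
of a complete DVR with algebraically closed residue field, 𝔛/R a strongly
semistable regular model with dual graph G, and ρ : Div(X) → Div(G) the
specialization map (a degree-preserving homomorphism taking effective divisors
to effective divisors and principal divisors to principal divisors, whose
restriction to X(K) surjects onto V(G)).  Then r_G(ρ(D)) ≥ r_X(D) for every
divisor D on X. -/
theorem specialization_lemma {K F : Type} [Field K] [Field F] [Algebra K F]
    {V : Type} [Fintype V] [DecidableEq V]
    (C : AlgCurve K F) (G : Multigraph V)
    (hinf : C.ratPt.Infinite)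
    (hfd : ∀ D : C.Point →₀ ℤ, FiniteDimensional K (C.L D))
    (ρ : (C.Point →₀ ℤ) →+ (V → ℤ))
    (hdeg : ∀ D : C.Point →₀ ℤ, divDeg (ρ D) = degD D)
    (heff : ∀ D : C.Point →₀ ℤ, EffD D → Effective (ρ D))
    (hprin : ∀ D : C.Point →₀ ℤ, C.IsPrincipal D → G.Principal (ρ D))
    (hsurj : ∀ w : V, ∃ P ∈ C.ratPt,
      ρ (Finsupp.single P 1) = fun u => if u = w then 1 else 0) :
    ∀ D : C.Point →₀ ℤ, C.crank D ≤ G.rank (ρ D) :=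
  specialization_lemma_general C G hinf ρ hdeg heff hprin hsurj
end
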